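/- Let (A, o) be a regular local ring of dimension n, let z_1, ..., z_n be a regular system of parameters of A, and let I and J be ideals of A each generated by a subset of {z_1, ..., z_n} (more generally, each generated by part of some regular system of parameters of A). Then the ideal I + J is generated by part of a regular system of parameters of A; namely, if the images of I and J in o/o² together span a t-dimensional subspace W of o/o², and z'_1, ..., z'_t are elements of I + J whose images in o/o² form a basis of W, then I + J = (z'_1, ..., z'_t)A. -/

import Mathlib

/-!
The images of a regular system of parameters `z` in `o/o²` are linearly independent, since by
Krull's height theorem `dim A ≤ dim o/o²`. So if `Q` is generated by some of the `z_i`, a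
combination `∑ a_i z_i` lying in `o²` has all `a_i ∈ o`, i.e. `Q ∩ o² ⊆ oQ`. Given `z'` as in the
statement, `Q ⊆ (z') + (Q ∩ o²) ⊆ (z') + oQ`, and Nakayama gives `Q = (z')`.
-/

open IsLocalRing

/-- A regular local ring: a Noetherian local ring whose maximal ideal is generated by
`dim A` elements. -/
def IsRegularLocalRing' (A : Type*) [CommRing A] : Prop :=
  IsNoetherianRing A ∧ ∃ h : IsLocalRing A, ∃ s : Finset A,
    Ideal.span (s : Set A) = @IsLocalRing.maximalIdeal A _ h ∧
    (s.card : WithBot (WithTop ℕ)) = ringKrullDim A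

section

variable {A : Type*} [CommRing A] [IsLocalRing A]

theorem linearIndependent_toCotangent_of_span_eq_top [IsNoetherianRing A] {ι : Type*} [Fintype ι]
    (z : ι → maximalIdeal A) (hz : Submodule.span A (Set.range z) = ⊤)
    (hdim : ringKrullDim A = Fintype.card ι) :
    LinearIndependent (ResidueField A) ((maximalIdeal A).toCotangent ∘ z) := by
  refine linearIndependent_of_top_le_span_of_card_le_finrank ?_ ?_
  · rw [top_le_iff, Set.range_comp, CotangentSpace.span_image_eq_top_iff, hz]
  · have := ringKrullDim_le_spanFinrank_maximalIdeal A
    rw [hdim, spanFinrank_maximalIdeal_eq_finrank_cotangentSpace] at this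
    exact_mod_cast this

theorem span_image_inf_sq_le_mul {ι : Type*} (z : ι → maximalIdeal A)
    (hz : LinearIndependent (ResidueField A) ((maximalIdeal A).toCotangent ∘ z)) (s : Set ι) :
    Ideal.span ((fun i => (z i : A)) '' s) ⊓ maximalIdeal A ^ 2 ≤
      maximalIdeal A * Ideal.span ((fun i => (z i : A)) '' s) := by
  rintro x ⟨hxs, hx2⟩
  obtain ⟨t, hts, c, rfl⟩ := (Submodule.mem_span_image_iff_exists_fun A).mp hxs
  have hsum :
      ∑ i, algebraMap A (ResidueField A) (c i) • (maximalIdeal A).toCotangent (z i) = 0 := by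
    have h0 : (maximalIdeal A).toCotangent (∑ i, c i • z i) = 0 :=
      (Ideal.toCotangent_eq_zero _ _).mpr (by simpa using hx2)
    simpa only [map_sum, map_smul, algebraMap_smul] using h0
  have hc : ∀ i, c i ∈ maximalIdeal A := fun i =>
    (residue_eq_zero_iff (c i)).mp <|
      Fintype.linearIndependent_iff.mp (hz.comp _ Subtype.val_injective) _ hsum i
  exact Ideal.sum_mem _ fun i _ => Ideal.mul_mem_mul (hc i) (Ideal.subset_span ⟨i, hts i.2, rfl⟩)

theorem mem_span_sup_sq_of_toCotangent_mem_span {ι : Type*} (z : ι → maximalIdeal A)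
    (x : maximalIdeal A) (hx : (maximalIdeal A).toCotangent x ∈
      Submodule.span (ResidueField A) (Set.range ((maximalIdeal A).toCotangent ∘ z))) :
    (x : A) ∈ Ideal.span (Set.range fun i => (z i : A)) ⊔ maximalIdeal A ^ 2 := by
  -- `A → A/o` is surjective, so the `A/o`-span is the `A`-span, the image of an `A`-span in `o`.
  rw [← SetLike.mem_coe,
    Submodule.coe_span_eq_span_of_surjective A (ResidueField A) residue_surjective,
    Set.range_comp, ← Submodule.map_span] at hx
  obtain ⟨y, hy, hyx⟩ := hx
  have hyP : (y : A) ∈ Ideal.span (Set.range fun i => (z i : A)) := by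
    have := Submodule.mem_map_of_mem (f := (maximalIdeal A).subtype) hy
    rwa [Submodule.map_span, ← Set.range_comp] at this
  have hyx2 : (y - x : A) ∈ maximalIdeal A ^ 2 := (Ideal.toCotangent_eq _).mp hyx
  simpa using Submodule.sub_mem_sup hyP hyx2

theorem eq_of_le_sup_sq_of_inf_sq_le_mul {P Q : Ideal A} (hQ : Q.FG) (hPQ : P ≤ Q)
    (hQP : Q ≤ P ⊔ maximalIdeal A ^ 2) (hQ2 : Q ⊓ maximalIdeal A ^ 2 ≤ maximalIdeal A * Q) :
    Q = P := by
  refine le_antisymm (Submodule.le_of_le_smul_of_le_jacobson_bot hQ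
    (jacobson_eq_maximalIdeal ⊥ bot_ne_top).ge ?_) hPQ
  calc Q = (P ⊔ maximalIdeal A ^ 2) ⊓ Q := (inf_eq_right.mpr hQP).symm
    _ = P ⊔ maximalIdeal A ^ 2 ⊓ Q := sup_inf_assoc_of_le _ hPQ
    _ ≤ P ⊔ maximalIdeal A • Q := sup_le_sup_left (inf_comm Q _ ▸ hQ2) _

end

theorem stmt5_general (A : Type*) [CommRing A] [IsNoetherianRing A] [IsLocalRing A]
    (n : ℕ) (hdim : ringKrullDim A = n) (z : Fin n → A)
    (hz : Ideal.span (Set.range z) = maximalIdeal A)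
    (I J : Ideal A)
    (hI : ∃ s ⊆ Set.range z, I = Ideal.span s)
    (hJ : ∃ s ⊆ Set.range z, J = Ideal.span s)
    -- `z'` : elements of `I + J` (viewed inside the maximal ideal `o`)
    (t : ℕ) (z' : Fin t → maximalIdeal A) (hz'mem : ∀ j, (z' j : A) ∈ I + J)
    (hspan : Submodule.span (ResidueField A)
        (Set.range fun j => (maximalIdeal A).toCotangent (z' j)) =
      Submodule.span (ResidueField A)
        ((maximalIdeal A).toCotangent '' {x : maximalIdeal A | (x : A) ∈ I + J})) :
    I + J = Ideal.span (Set.range fun j => (z' j : A)) ∧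
      ∃ (w : Fin n → A), Ideal.span (Set.range w) = maximalIdeal A ∧
        ∃ s ⊆ Set.range w, I + J = Ideal.span s := by
  obtain ⟨sI, hsI, rfl⟩ := hI
  obtain ⟨sJ, hsJ, rfl⟩ := hJ
  have hS : sI ∪ sJ ⊆ Set.range z := Set.union_subset hsI hsJ
  have hQ : Ideal.span sI + Ideal.span sJ = Ideal.span (z '' (z ⁻¹' (sI ∪ sJ))) := by
    rw [Set.image_preimage_eq_of_subset hS, Ideal.span_union]
    rfl
  refine ⟨?_, z, hz, sI ∪ sJ, hS, by rwa [Set.image_preimage_eq_of_subset hS] at hQ⟩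
  have hzm : ∀ i, z i ∈ maximalIdeal A := fun i => hz ▸ Ideal.subset_span ⟨i, rfl⟩
  have hQm : Ideal.span sI + Ideal.span sJ ≤ maximalIdeal A :=
    hQ ▸ hz ▸ Ideal.span_mono (Set.image_subset_range _ _)
  have hzli : LinearIndependent (ResidueField A)
      ((maximalIdeal A).toCotangent ∘ fun i => (⟨z i, hzm i⟩ : maximalIdeal A)) :=
    linearIndependent_toCotangent_of_span_eq_top _
      ((Submodule.span_range_subtype_eq_top_iff _ hzm).mpr hz) (by simpa using hdim)
  refine eq_of_le_sup_sq_of_inf_sq_le_mul (IsNoetherian.noetherian _) ?_ ?_ ?_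
  · exact Ideal.span_le.mpr (Set.range_subset_iff.mpr hz'mem)
  · intro x hx
    refine mem_span_sup_sq_of_toCotangent_mem_span z' ⟨x, hQm hx⟩ ?_
    exact hspan ▸ Submodule.subset_span ⟨⟨x, hQm hx⟩, hx, rfl⟩
  · rw [hQ]
    exact span_image_inf_sq_le_mul _ hzli _

/-- let `(A, o)` be a regular local ring of dimension `n` with a regular
system of parameters `z_1, ..., z_n`, and let `I`, `J` be ideals each generated by part of
a regular system of parameters (e.g. by a subset of `{z_1, ..., z_n}`).  If the images of
`I` and `J` in `o/o²` together span a `t`-dimensional subspace `W` and `z'_1, ..., z'_t`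
are elements of `I + J` whose images in `o/o²` form a basis of `W`, then
`I + J = (z'_1, ..., z'_t)A`; in particular `I + J` is generated by part of a regular
system of parameters of `A`. -/
theorem stmt5 (A : Type*) [CommRing A] [IsNoetherianRing A] [IsLocalRing A]
    (hA : IsRegularLocalRing' A)
    (n : ℕ) (hdim : ringKrullDim A = n) (z : Fin n → A)
    (hz : Ideal.span (Set.range z) = maximalIdeal A)
    (I J : Ideal A)
    (hI : ∃ s ⊆ Set.range z, I = Ideal.span s)
    (hJ : ∃ s ⊆ Set.range z, J = Ideal.span s)
    -- `z'` : elements of `I + J` (viewed inside the maximal ideal `o`)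
    (t : ℕ) (z' : Fin t → maximalIdeal A) (hz'mem : ∀ j, (z' j : A) ∈ I + J)
    -- whose images in `o/o²` form a basis of the subspace `W ⊆ o/o²` spanned by the
    -- images of `I` and `J`
    (hli : LinearIndependent (ResidueField A)
      (fun j => (maximalIdeal A).toCotangent (z' j)))
    (hspan : Submodule.span (ResidueField A)
        (Set.range fun j => (maximalIdeal A).toCotangent (z' j)) =
      Submodule.span (ResidueField A)
        ((maximalIdeal A).toCotangent '' {x : maximalIdeal A | (x : A) ∈ I + J})) :
    I + J = Ideal.span (Set.range fun j => (z' j : A)) ∧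
      ∃ (w : Fin n → A), Ideal.span (Set.range w) = maximalIdeal A ∧
        ∃ s ⊆ Set.range w, I + J = Ideal.span s :=
  stmt5_general A n hdim z hz I J hI hJ t z' hz'mem hspan
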